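/- arXiv:0804.1490 — 2 statements merged into one kernel-verified Lean document; each statement's English description precedes it below -/
import Mathlib

section
/- For all x, y ∈ K = ℚ(ζ₈, √5), the 2×2 complex matrix Ξ(x, y) = [[x, y], [ζ₈·σ(y), σ(x)]] has determinant det Ξ(x, y) = x·σ(x) − ζ₈·y·σ(y), and this determinant equals 0 if and only if x = 0 and y = 0. In particular, each user's codeword difference matrix Ξ(x, y) with (x, y) ≠ (0, 0) is invertible (full-rank / nonvanishing-determinant property). -/
open Complex Matrix

/-- The eighth root of unity `ζ₈ = e^{iπ/4}`. -/
noncomputable def ζ₈ : ℂ := Complex.exp (Real.pi * Complex.I / 4)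

/-- The golden ratio `θ = (1+√5)/2` as a complex number. -/
noncomputable def θ : ℂ := (((1 + Real.sqrt 5) / 2 : ℝ) : ℂ)

/-- Its conjugate `θ̄ = (1−√5)/2` as a complex number. -/
noncomputable def θbar : ℂ := (((1 - Real.sqrt 5) / 2 : ℝ) : ℂ)

/-- The subfield `ℚ(i) = {p + q·i : p, q ∈ ℚ}` of `ℂ`, as a set. -/
def Qi : Set ℂ := {z | ∃ p q : ℚ, z = (p : ℂ) + (q : ℂ) * Complex.I}

/-- The element `x = x₀ + x₁ζ₈ + x₂θ + x₃ζ₈θ` of `K = ℚ(ζ₈, √5)` with coordinates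
`x₀, x₁, x₂, x₃ ∈ ℚ(i)` over the basis `(1, ζ₈, θ, ζ₈θ)`. -/
noncomputable def emb (a : Fin 4 → ℂ) : ℂ := a 0 + a 1 * ζ₈ + a 2 * θ + a 3 * ζ₈ * θ

/-- The image `σ(x) = x₀ + x₁ζ₈ + x₂θ̄ + x₃ζ₈θ̄` of `x` under the automorphism `σ` of `K`
fixing `F = ℚ(ζ₈)` with `σ(√5) = −√5`. -/
noncomputable def embσ (a : Fin 4 → ℂ) : ℂ := a 0 + a 1 * ζ₈ + a 2 * θbar + a 3 * ζ₈ * θbar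

/-- The Golden-code codeword matrix `Ξ(x, y) = [[x, y], [ζ₈·σ(y), σ(x)]]`, where `x` and `y`
are given by their coordinates `a`, `b` over the `ℚ(i)`-basis `(1, ζ₈, θ, ζ₈θ)` of `K`. -/
noncomputable def Xi (a b : Fin 4 → ℂ) : Matrix (Fin 2) (Fin 2) ℂ :=
  !![emb a, emb b; ζ₈ * embσ b, embσ a]

/-!
Write `2x = P + Q√5` with `P, Q ∈ F`; then `4·x·σ(x) = P² − 5Q²`, so a vanishing determinant
means `P² − 5Q² = ζ₈ (S² − 5T²)`, and after clearing denominators `P, Q, S, T ∈ ℤ[ζ₈]`.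
The prime `𝔭 = (2 − i)` of `ℤ[ζ₈]` has residue field `𝔽₂₅`, in which `5 = 0` and `ζ₈` (of order 8
in the cyclic group `𝔽₂₅ˣ` of order 24) is not a square. Reducing mod `𝔭` shows that `𝔭` divides
`P` and `S`, and then, as `5 = (2 − i)(2 + i)`, also `Q` and `T`. Dividing by `2 − i` gives a new
solution, so by descent all of `P, Q, S, T` vanish.
-/

namespace QuadraticAlgebra

variable {R A : Type*} [CommRing R] [CommRing A] {a b : R}

def liftRingHom (f : R →+* A) (u : A) (hu : u * u = f a + f b * u) :
    QuadraticAlgebra R a b →+* A :=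
  letI := f.toAlgebra
  (lift ⟨u, by simpa [Algebra.smul_def, RingHom.algebraMap_toAlgebra] using hu⟩).toRingHom

theorem liftRingHom_apply (f : R →+* A) (u : A) (hu : u * u = f a + f b * u)
    (z : QuadraticAlgebra R a b) : liftRingHom f u hu z = f z.re + f z.im * u := by
  let := f.toAlgebra
  simp [liftRingHom, Algebra.smul_def, RingHom.algebraMap_toAlgebra]

end QuadraticAlgebra

theorem eq_zero_of_forall_pow_dvd {α : Type*} [CommMonoidWithZero α] [IsCancelMulZero α]
    [WfDvdMonoid α] {a b : α} (ha : ¬IsUnit a) (h : ∀ n, a ^ n ∣ b) : b = 0 := by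
  by_contra hb
  obtain ⟨n, hn⟩ := FiniteMultiplicity.of_not_isUnit ha hb
  exact hn (h (n + 1))

section Descent

variable {R k : Type*} [CommRing R] [IsDomain R] [CommRing k] (φ : R →+* k) {π π' ζ : R}

theorem dvd_of_sq_sub_mul_sq_eq (hker : ∀ r, φ r = 0 ↔ π ∣ r) (hπ : π ≠ 0)
    (hπ' : IsUnit (φ π')) (hζ : ∀ x y : k, x ^ 2 = φ ζ * y ^ 2 → x = 0 ∧ y = 0)
    {U V S T : R} (h : U ^ 2 - π * π' * V ^ 2 = ζ * (S ^ 2 - π * π' * T ^ 2)) :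
    π ∣ U ∧ π ∣ V ∧ π ∣ S ∧ π ∣ T := by
  have hφπ : φ π = 0 := (hker π).2 dvd_rfl
  obtain ⟨hU, hS⟩ := hζ (φ U) (φ S) (by
    simpa [hφπ] using congrArg φ h)
  obtain ⟨U₁, rfl⟩ := (hker U).1 hU
  obtain ⟨S₁, rfl⟩ := (hker S).1 hS
  have h₁ : π' * (V ^ 2 - ζ * T ^ 2) = π * (U₁ ^ 2 - ζ * S₁ ^ 2) :=
    mul_left_cancel₀ hπ (by linear_combination -h)
  obtain ⟨hV, hT⟩ := hζ (φ V) (φ T) (by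
    have := congrArg φ h₁
    simp only [map_sub, map_mul, map_pow, hφπ, zero_mul] at this
    linear_combination (hπ'.mul_right_eq_zero.1 this))
  exact ⟨dvd_mul_right _ _, (hker V).1 hV, dvd_mul_right _ _, (hker T).1 hT⟩

theorem eq_zero_of_sq_sub_mul_sq_eq [WfDvdMonoid R] [Nontrivial k] (hker : ∀ r, φ r = 0 ↔ π ∣ r)
    (hπ : π ≠ 0) (hπ' : IsUnit (φ π')) (hζ : ∀ x y : k, x ^ 2 = φ ζ * y ^ 2 → x = 0 ∧ y = 0)
    {U V S T : R} (h : U ^ 2 - π * π' * V ^ 2 = ζ * (S ^ 2 - π * π' * T ^ 2)) :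
    U = 0 ∧ V = 0 ∧ S = 0 ∧ T = 0 := by
  have hpow : ∀ n : ℕ, ∀ {U V S T : R}, U ^ 2 - π * π' * V ^ 2 = ζ * (S ^ 2 - π * π' * T ^ 2) →
      π ^ n ∣ U ∧ π ^ n ∣ V ∧ π ^ n ∣ S ∧ π ^ n ∣ T := by
    intro n
    induction n with
    | zero => simp
    | succ n ih =>
      intro U V S T h
      obtain ⟨⟨U, rfl⟩, ⟨V, rfl⟩, ⟨S, rfl⟩, ⟨T, rfl⟩⟩ := dvd_of_sq_sub_mul_sq_eq φ hker hπ hπ' hζ h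
      have h' : U ^ 2 - π * π' * V ^ 2 = ζ * (S ^ 2 - π * π' * T ^ 2) :=
        mul_left_cancel₀ (pow_ne_zero 2 hπ) (by linear_combination h)
      simp only [pow_succ', mul_dvd_mul_iff_left hπ]
      exact ih h'
  have hπ_unit : ¬IsUnit π := fun hu => by
    simpa [(hker π).2 dvd_rfl] using hu.map φ
  have hzero := fun {x : R} (hx : ∀ n, π ^ n ∣ x) => eq_zero_of_forall_pow_dvd hπ_unit hx
  exact ⟨hzero fun n => (hpow n h).1, hzero fun n => (hpow n h).2.1,
    hzero fun n => (hpow n h).2.2.1, hzero fun n => (hpow n h).2.2.2⟩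

end Descent

open QuadraticAlgebra

namespace GoldenCode

theorem ζ₈_eq : ζ₈ = ((√2 / 2 : ℝ) : ℂ) + ((√2 / 2 : ℝ) : ℂ) * I := by
  rw [ζ₈, show (Real.pi : ℂ) * I / 4 = ((Real.pi / 4 : ℝ) : ℂ) * I by push_cast; ring,
    exp_mul_I, ← ofReal_cos, ← ofReal_sin, Real.cos_pi_div_four, Real.sin_pi_div_four]

theorem ζ₈_mul_self : ζ₈ * ζ₈ = I := by
  have h2 : ((√2 : ℝ) : ℂ) * ((√2 : ℝ) : ℂ) = 2 := by
    norm_cast; exact Real.mul_self_sqrt zero_le_two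
  rw [ζ₈_eq]; push_cast
  linear_combination (1 + I) ^ 2 / 4 * h2 + I_mul_I / 2

theorem eq_zero_of_intCast_add_intCast_mul_sqrt_two {m n : ℤ} (h : (m : ℝ) + n * √2 = 0) :
    m = 0 ∧ n = 0 := by
  obtain rfl | hn := eq_or_ne n 0
  · simpa using h
  · exact absurd h ((irrational_sqrt_two.intCast_mul hn).intCast_add m).ne_zero

theorem eq_zero_of_add_mul_ζ₈ {u v : GaussianInt} (h : (u : ℂ) + v * ζ₈ = 0) : u = 0 ∧ v = 0 := by
  rw [ζ₈_eq] at h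
  have hre := congrArg Complex.re h
  have him := congrArg Complex.im h
  simp only [add_re, add_im, mul_re, mul_im, ofReal_re, ofReal_im, I_re, I_im,
    ← GaussianInt.intCast_re, ← GaussianInt.intCast_im, zero_re, zero_im] at hre him
  obtain ⟨h₁, h₂⟩ := eq_zero_of_intCast_add_intCast_mul_sqrt_two (m := 2 * u.re) (n := v.re - v.im)
    (by push_cast; linear_combination 2 * hre)
  obtain ⟨h₃, h₄⟩ := eq_zero_of_intCast_add_intCast_mul_sqrt_two (m := 2 * u.im) (n := v.re + v.im)
    (by push_cast; linear_combination 2 * him)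
  constructor <;> ext <;> simp <;> omega

/-- The ring of integers `ℤ[ζ₈] = ℤ[i][ω]`, `ω² = i`, of `F = ℚ(ζ₈)`. -/
abbrev Zζ₈ := QuadraticAlgebra GaussianInt ⟨0, 1⟩ 0

noncomputable def toComplex : Zζ₈ →+* ℂ :=
  liftRingHom GaussianInt.toComplex ζ₈ (by simp [ζ₈_mul_self, GaussianInt.toComplex_def])

theorem toComplex_apply (x : Zζ₈) : toComplex x = x.re + x.im * ζ₈ :=
  liftRingHom_apply _ _ _ x

theorem toComplex_injective : Function.Injective toComplex := by
  refine (injective_iff_map_eq_zero toComplex).2 fun x hx => ?_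
  obtain ⟨h₁, h₂⟩ := eq_zero_of_add_mul_ζ₈ ((toComplex_apply x).symm.trans hx)
  ext1 <;> assumption

instance : IsDomain Zζ₈ := toComplex_injective.isDomain toComplex

instance : IsNoetherianRing Zζ₈ := IsNoetherianRing.of_finite GaussianInt Zζ₈

abbrev F25 := QuadraticAlgebra (ZMod 5) 2 0

def gaussianIntReduce : GaussianInt →+* ZMod 5 := Zsqrtd.lift ⟨2, by decide⟩

theorem gaussianIntReduce_apply (z : GaussianInt) : gaussianIntReduce z = z.re + z.im * 2 := rfl

theorem gaussianIntReduce_eq_zero_iff (z : GaussianInt) :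
    gaussianIntReduce z = 0 ↔ (⟨2, -1⟩ : GaussianInt) ∣ z := by
  constructor
  · intro h
    rw [gaussianIntReduce_apply] at h
    obtain ⟨k, hk⟩ := (ZMod.intCast_zmod_eq_zero_iff_dvd (z.re + 2 * z.im) 5).1
      (by push_cast; linear_combination h)
    exact ⟨⟨2 * k - z.im, k⟩, by ext <;> simp; omega⟩
  · rintro ⟨w, rfl⟩
    rw [map_mul, show gaussianIntReduce ⟨2, -1⟩ = 0 by decide, zero_mul]

/-- Reduction modulo the prime `2 − i`: `i ↦ 2`, `ζ₈ ↦ ω`. -/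
noncomputable def reduce : Zζ₈ →+* F25 :=
  liftRingHom ((algebraMap (ZMod 5) F25).comp gaussianIntReduce) ω (by
    rw [omega_mul_omega_eq_mk]; ext <;> simp [gaussianIntReduce_apply])

theorem reduce_apply (x : Zζ₈) : reduce x = ⟨gaussianIntReduce x.re, gaussianIntReduce x.im⟩ := by
  rw [reduce, liftRingHom_apply]; ext <;> simp

theorem reduce_eq_zero_iff (x : Zζ₈) : reduce x = 0 ↔ (⟨⟨2, -1⟩, 0⟩ : Zζ₈) ∣ x := by
  rw [reduce_apply, QuadraticAlgebra.ext_iff]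
  simp only [re_zero, im_zero, gaussianIntReduce_eq_zero_iff]
  constructor
  · rintro ⟨⟨u, hu⟩, ⟨v, hv⟩⟩
    exact ⟨⟨u, v⟩, by ext <;> simp [hu, hv]⟩
  · rintro ⟨w, rfl⟩
    exact ⟨⟨w.re, by simp⟩, ⟨w.im, by simp⟩⟩

theorem isUnit_reduce : IsUnit (reduce ⟨⟨2, 1⟩, 0⟩) :=
  IsUnit.of_mul_eq_one (reduce ⟨⟨2, 1⟩, 0⟩) (by rw [← map_mul]; decide)

theorem F25.eq_zero_of_sq_eq_omega_mul_sq (x y : F25) (h : x ^ 2 = ω * y ^ 2) :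
    x = 0 ∧ y = 0 := by
  -- `ω` has order 8 in the cyclic group `𝔽₂₅ˣ` of order 24, so it is not a square
  have key : ∀ x₀ x₁ y₀ y₁ : ZMod 5, x₀ * x₀ + 2 * (x₁ * x₁) = 2 * (2 * (y₀ * y₁)) →
      2 * (x₀ * x₁) = y₀ * y₀ + 2 * (y₁ * y₁) → x₀ = 0 ∧ x₁ = 0 ∧ y₀ = 0 ∧ y₁ = 0 := by
    decide
  have hre := congrArg QuadraticAlgebra.re h
  have him := congrArg QuadraticAlgebra.im h
  simp only [pow_two, re_mul, im_mul, omega_re, omega_im, zero_mul, one_mul, mul_one, add_zero,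
    zero_add] at hre him
  obtain ⟨h₁, h₂, h₃, h₄⟩ :=
    key x.re x.im y.re y.im (by linear_combination hre) (by linear_combination him)
  exact ⟨QuadraticAlgebra.ext h₁ h₂, QuadraticAlgebra.ext h₃ h₄⟩

theorem eq_zero_of_sq_sub_five_mul_sq_eq {U V S T : Zζ₈}
    (h : U ^ 2 - 5 * V ^ 2 = ω * (S ^ 2 - 5 * T ^ 2)) : U = 0 ∧ V = 0 ∧ S = 0 ∧ T = 0 := by
  have : Fact (1 < 5) := ⟨by norm_num⟩
  rw [show (5 : Zζ₈) = ⟨⟨2, -1⟩, 0⟩ * ⟨⟨2, 1⟩, 0⟩ by decide] at h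
  refine eq_zero_of_sq_sub_mul_sq_eq reduce reduce_eq_zero_iff (by decide) isUnit_reduce
    (fun x y hxy => F25.eq_zero_of_sq_eq_omega_mul_sq x y ?_) h
  rwa [show reduce ω = ω by decide] at hxy

/-- `P` in `2x = P + Q√5` for `x = emb α` (recall `2θ = 1 + √5`); `sqrtFivePart α` is `Q`. -/
def rationalPart (α : Fin 4 → GaussianInt) : Zζ₈ := ⟨2 * α 0 + α 2, 2 * α 1 + α 3⟩

def sqrtFivePart (α : Fin 4 → GaussianInt) : Zζ₈ := ⟨α 2, α 3⟩

theorem two_mul_emb (α : Fin 4 → GaussianInt) :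
    2 * emb (fun j => (α j : ℂ)) =
      toComplex (rationalPart α) + toComplex (sqrtFivePart α) * (√5 : ℝ) := by
  simp only [emb, θ, toComplex_apply, rationalPart, sqrtFivePart, map_add, map_mul, map_ofNat]
  push_cast; ring

theorem two_mul_embσ (α : Fin 4 → GaussianInt) :
    2 * embσ (fun j => (α j : ℂ)) =
      toComplex (rationalPart α) - toComplex (sqrtFivePart α) * (√5 : ℝ) := by
  simp only [embσ, θbar, toComplex_apply, rationalPart, sqrtFivePart, map_add, map_mul, map_ofNat]
  push_cast; ring

theorem four_mul_emb_mul_embσ (α : Fin 4 → GaussianInt) :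
    4 * (emb (fun j => (α j : ℂ)) * embσ (fun j => (α j : ℂ))) =
      toComplex (rationalPart α ^ 2 - 5 * sqrtFivePart α ^ 2) := by
  have h5 : ((√5 : ℝ) : ℂ) ^ 2 = 5 := by norm_cast; exact Real.sq_sqrt (by norm_num)
  rw [map_sub, map_mul, map_pow, map_pow, map_ofNat,
    show ∀ x y : ℂ, 4 * (x * y) = (2 * x) * (2 * y) by intros; ring, two_mul_emb, two_mul_embσ]
  linear_combination -toComplex (sqrtFivePart α) ^ 2 * h5

theorem emb_gaussianInt_eq_zero_of_emb_mul_embσ_eq_ζ₈_mul (α β : Fin 4 → GaussianInt)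
    (h : emb (fun j => (α j : ℂ)) * embσ (fun j => (α j : ℂ)) =
      ζ₈ * (emb (fun j => (β j : ℂ)) * embσ (fun j => (β j : ℂ)))) :
    emb (fun j => (α j : ℂ)) = 0 ∧ emb (fun j => (β j : ℂ)) = 0 := by
  have hω : toComplex ω = ζ₈ := by simp [toComplex_apply]
  obtain ⟨hPα, hQα, hPβ, hQβ⟩ := eq_zero_of_sq_sub_five_mul_sq_eq (U := rationalPart α)
    (V := sqrtFivePart α) (S := rationalPart β) (T := sqrtFivePart β) <| toComplex_injective <| by
    rw [map_mul, hω, ← four_mul_emb_mul_embσ, ← four_mul_emb_mul_embσ]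
    linear_combination 4 * h
  have hα := two_mul_emb α
  have hβ := two_mul_emb β
  simp only [hPα, hQα, hPβ, hQβ, map_zero, zero_mul, add_zero, mul_eq_zero, two_ne_zero,
    false_or] at hα hβ
  exact ⟨hα, hβ⟩

theorem exists_gaussianInt_eq_nat_mul {z : ℂ} (hz : z ∈ Qi) :
    ∃ D : ℕ, D ≠ 0 ∧ ∃ w : GaussianInt, (w : ℂ) = D * z := by
  obtain ⟨p, q, rfl⟩ := hz
  refine ⟨p.den * q.den, by positivity, ⟨p.num * q.den, q.num * p.den⟩, ?_⟩
  rw [GaussianInt.toComplex_def', Rat.cast_def, Rat.cast_def]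
  push_cast
  field_simp

theorem exists_gaussianInt_eq_nat_mul_of_forall {ι : Type*} [Fintype ι] {a : ι → ℂ}
    (ha : ∀ j, a j ∈ Qi) : ∃ D : ℕ, D ≠ 0 ∧ ∃ α : ι → GaussianInt, ∀ j, (α j : ℂ) = D * a j := by
  classical
  choose D hD w hw using fun j => exists_gaussianInt_eq_nat_mul (ha j)
  refine ⟨∏ j, D j, Finset.prod_ne_zero_iff.2 fun j _ => hD j,
    fun j => ((∏ k ∈ Finset.univ.erase j, D k : ℕ) : GaussianInt) * w j, fun j => ?_⟩
  rw [map_mul, hw j, map_natCast, ← Finset.prod_erase_mul _ _ (Finset.mem_univ j)]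
  push_cast; ring

theorem emb_eq_mul_and_embσ_eq_mul {c : Fin 4 → ℂ} {δ : Fin 4 → GaussianInt} {D : ℂ}
    (h : ∀ j, (δ j : ℂ) = D * c j) :
    emb (fun j => (δ j : ℂ)) = D * emb c ∧ embσ (fun j => (δ j : ℂ)) = D * embσ c := by
  simp only [emb, embσ, h]
  constructor <;> ring

theorem emb_eq_zero_of_emb_mul_embσ_eq_ζ₈_mul {a b : Fin 4 → ℂ} (ha : ∀ j, a j ∈ Qi)
    (hb : ∀ j, b j ∈ Qi) (h : emb a * embσ a = ζ₈ * (emb b * embσ b)) : emb a = 0 ∧ emb b = 0 := by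
  obtain ⟨D, hD, γ, hγ⟩ := exists_gaussianInt_eq_nat_mul_of_forall (a := Sum.elim a b)
    (by rintro (j | j); exacts [ha j, hb j])
  obtain ⟨hembα, hembσα⟩ := emb_eq_mul_and_embσ_eq_mul (δ := fun j => γ (.inl j)) (c := a)
    fun j => hγ (.inl j)
  obtain ⟨hembβ, hembσβ⟩ := emb_eq_mul_and_embσ_eq_mul (δ := fun j => γ (.inr j)) (c := b)
    fun j => hγ (.inr j)
  obtain ⟨hα, hβ⟩ := emb_gaussianInt_eq_zero_of_emb_mul_embσ_eq_ζ₈_mul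
    (fun j => γ (.inl j)) (fun j => γ (.inr j)) <| by
    rw [hembα, hembσα, hembβ, hembσβ]
    linear_combination (D : ℂ) ^ 2 * h
  have hD' : (D : ℂ) ≠ 0 := Nat.cast_ne_zero.2 hD
  rw [hembα] at hα
  rw [hembβ] at hβ
  exact ⟨(mul_eq_zero.1 hα).resolve_left hD', (mul_eq_zero.1 hβ).resolve_left hD'⟩

end GoldenCode

/-- For all `x, y ∈ K = ℚ(ζ₈, √5)`, `det Ξ(x, y) = x·σ(x) − ζ₈·y·σ(y)`, and this determinant
vanishes iff `x = 0` and `y = 0`; in particular `Ξ(x, y)` is invertible for `(x, y) ≠ (0, 0)`. -/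
theorem golden_code_nonvanishing_determinant :
    ∀ a b : Fin 4 → ℂ, (∀ i, a i ∈ Qi) → (∀ i, b i ∈ Qi) →
      (Xi a b).det = emb a * embσ a - ζ₈ * (emb b * embσ b) ∧
      ((Xi a b).det = 0 ↔ emb a = 0 ∧ emb b = 0) ∧
      (¬(emb a = 0 ∧ emb b = 0) → IsUnit (Xi a b)) := by
  intro a b ha hb
  have hdet : (Xi a b).det = emb a * embσ a - ζ₈ * (emb b * embσ b) := by
    rw [Xi, det_fin_two_of]; ring
  have hdet_eq_zero : (Xi a b).det = 0 ↔ emb a = 0 ∧ emb b = 0 := by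
    rw [hdet, sub_eq_zero]
    exact ⟨GoldenCode.emb_eq_zero_of_emb_mul_embσ_eq_ζ₈_mul ha hb,
      fun ⟨hx, hy⟩ => by rw [hx, hy, zero_mul, zero_mul, mul_zero]⟩
  refine ⟨hdet, hdet_eq_zero, fun hne => ?_⟩
  rw [isUnit_iff_isUnit_det, isUnit_iff_ne_zero]
  exact mt hdet_eq_zero.1 hne
end

section
/- Let γ ∈ ℂ be transcendental over ℚ. For all x₁, y₁, x₂, y₂ ∈ K = ℚ(ζ₈, √5) with (x₁, y₁) ≠ (0, 0) and (x₂, y₂) ≠ (0, 0), the 4×4 complex matrix X with 2×2 blocks X = [[Ξ(x₁, y₁), τ(Ξ(x₁, y₁))], [γ·Ξ(x₂, y₂), τ(Ξ(x₂, y₂))]] has nonzero determinant. (The determinant is a polynomial in γ with coefficients in the number field K and nonzero constant term, hence cannot vanish at a transcendental γ.) -/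
open Complex Matrix

/-- `τ(x) = x₀ − x₁ζ₈ + x₂θ − x₃ζ₈θ` (the automorphism `τ` fixes `√5`, `τ(ζ₈) = −ζ₈`). -/
noncomputable def embτ (a : Fin 4 → ℂ) : ℂ := a 0 - a 1 * ζ₈ + a 2 * θ - a 3 * ζ₈ * θ

/-- `τ(σ(x)) = σ(τ(x)) = x₀ − x₁ζ₈ + x₂θ̄ − x₃ζ₈θ̄`. -/
noncomputable def embστ (a : Fin 4 → ℂ) : ℂ := a 0 - a 1 * ζ₈ + a 2 * θbar - a 3 * ζ₈ * θbar

/-- The entrywise image `τ(Ξ(x, y)) = [[τ(x), τ(y)], [τ(ζ₈)·τ(σ(y)), τ(σ(x))]]`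
`= [[τ(x), τ(y)], [−ζ₈·στ(y), στ(x)]]`. -/
noncomputable def tauXi (a b : Fin 4 → ℂ) : Matrix (Fin 2) (Fin 2) ℂ :=
  !![embτ a, embτ b; -ζ₈ * embστ b, embστ a]

/-
Expanding along `γ`, `det X` is a polynomial in `γ` with algebraic coefficients whose constant
term is `det Ξ(x₁, y₁) · det τ(Ξ(x₂, y₂))`, so it suffices that these two Golden-code
determinants are nonzero. Writing `x = u + vθ`, `y = s + tθ` with `u, v, s, t ∈ ℚ(ζ)` for
`ζ = ±ζ₈`, one has `det Ξ(x, y) = N(u, v) − ζ N(s, t)` with `N(u, v) = u² + uv − v²`.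
After clearing denominators, `N(u, v) = ζ N(s, t)` is an equation in `ℤ[ζ₈]`, and
`4 N(u, v) = (2u + v)² − 5v²`. In `ℤ[ζ₈]/5 ≅ 𝔽₂₅ × 𝔽₂₅` the image of `ζ₈` is not a square
(`ζ₈¹² = −1`), so `a² ≡ ζ₈ b² (mod 5)` forces `5 ∣ a, b`; infinite descent at `5` then leaves
only the zero solution.
-/

open Polynomial

theorem det_fromBlocks_smul_ne_zero_of_transcendental {R S m n : Type*} [CommRing R]
    [CommRing S] [Algebra R S] [Fintype m] [Fintype n] [DecidableEq m] [DecidableEq n]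
    (A : Matrix m m R) (B : Matrix m n R) (C : Matrix n m R) (D : Matrix n n R) {γ : S}
    (hγ : Transcendental R γ)
    (hAD : (A.map (algebraMap R S)).det * (D.map (algebraMap R S)).det ≠ 0) :
    (fromBlocks (A.map (algebraMap R S)) (B.map (algebraMap R S))
      (γ • C.map (algebraMap R S)) (D.map (algebraMap R S))).det ≠ 0 := by
  set P : R[X] := (fromBlocks (A.map Polynomial.C) (B.map Polynomial.C)
      ((X : R[X]) • C.map Polynomial.C) (D.map Polynomial.C)).det
  have hP : aeval γ P = (fromBlocks (A.map (algebraMap R S)) (B.map (algebraMap R S))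
      (γ • C.map (algebraMap R S)) (D.map (algebraMap R S))).det := by
    rw [AlgHom.map_det]
    congr 1
    ext (i | i) (j | j) <;> simp [Algebra.commutes]
  have hP0 : P.coeff 0 = A.det * D.det := by
    rw [coeff_zero_eq_eval_zero, ← coe_evalRingHom, RingHom.map_det, RingHom.mapMatrix_apply,
      fromBlocks_map]
    convert det_fromBlocks_zero₂₁ A B D <;> ext <;> simp
  rw [← hP]
  refine fun h => hγ ⟨P, fun hP' => hAD ?_, h⟩
  simpa [RingHom.map_det, hP'] using congrArg (algebraMap R S) hP0.symm

lemma Matrix.exists_map_algebraMap_eq {R A m n : Type*} [CommSemiring R] [CommSemiring A]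
    [Algebra R A] {S : Subalgebra R A} {M : Matrix m n A} (hM : ∀ i j, M i j ∈ S) :
    ∃ M' : Matrix m n S, M'.map (algebraMap S A) = M :=
  ⟨.of fun i j => ⟨M i j, hM i j⟩, rfl⟩

theorem eq_zero_of_sq_eq_mul_sq {R : Type*} [CommRing R] {n : ℕ}
    (hR : ∀ x : R, x ^ (2 * n + 1) = x) (h2 : IsUnit (2 : R)) {c x y : R} (hc : c ^ n = -1)
    (h : x ^ 2 = c * y ^ 2) : x = 0 ∧ y = 0 := by
  -- `w ^ (2n)` is idempotent, and `x ^ (2n) = -y ^ (2n)` makes both idempotents vanish.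
  have hidem : ∀ w : R, w ^ (2 * n) * w ^ (2 * n) = w ^ (2 * n) := fun w => by
    rcases n with _ | n
    · simp
    · calc w ^ (2 * (n + 1)) * w ^ (2 * (n + 1)) = w ^ (2 * n + 1) * w ^ (2 * (n + 1) + 1) := by
            ring
        _ = w ^ (2 * (n + 1)) := by rw [hR]; ring
  have hxy : x ^ (2 * n) = -y ^ (2 * n) := by
    rw [pow_mul, h, mul_pow, hc, ← pow_mul]; ring
  have hy : y ^ (2 * n) = 0 := by
    refine h2.mul_right_eq_zero.1 ?_
    linear_combination -(hidem y) + hidem x + (y ^ (2 * n) - x ^ (2 * n) + 1) * hxy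
  have hx : x ^ (2 * n) = 0 := by rw [hxy, hy, neg_zero]
  exact ⟨by rw [← hR x, pow_succ, hx, zero_mul], by rw [← hR y, pow_succ, hy, zero_mul]⟩

/-- `N(x + yθ) = (x + yθ)(x + yθ̄)`, the norm from `ℚ(ζ₈, √5)` down to `ℚ(ζ₈)`. -/
def goldenNorm {R : Type*} [CommRing R] (x y : R) : R := x ^ 2 + x * y - y ^ 2

lemma map_goldenNorm {R S : Type*} [CommRing R] [CommRing S] (f : R →+* S) (x y : R) :
    f (goldenNorm x y) = goldenNorm (f x) (f y) := by
  simp [goldenNorm]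

lemma cyclotomic_eight : cyclotomic 8 ℤ = X ^ 4 + 1 := by
  rw [show 8 = 2 ^ (2 + 1) by rfl, cyclotomic_prime_pow_eq_geom_sum Nat.prime_two]
  simp [Finset.sum_range_succ, ← pow_mul, add_comm]

lemma isPrimitiveRoot_of_sq_eq_I {z : ℂ} (hz : z ^ 2 = I) : IsPrimitiveRoot z 8 := by
  have h4 : z ^ 4 = -1 := by rw [show z ^ 4 = (z ^ 2) ^ 2 by ring, hz, I_sq]
  have : orderOf z = 8 := orderOf_eq_prime_pow (p := 2) (n := 2) (by norm_num [h4])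
    (by rw [show z ^ 2 ^ (2 + 1) = (z ^ 4) ^ 2 by ring, h4]; norm_num)
  exact this ▸ IsPrimitiveRoot.orderOf z

/-- `ℤ[ζ₈]`, presented abstractly so that it maps both to `ℂ` (sending the root to either
square root of `i`) and onto its reduction modulo `5`. -/
abbrev ZZeta8 : Type := AdjoinRoot (cyclotomic 8 ℤ)

namespace ZZeta8

noncomputable abbrev ρ : ZZeta8 := AdjoinRoot.root _

lemma ρ_pow_four : ρ ^ 4 = -1 := by
  rw [eq_neg_iff_add_eq_zero]
  calc ρ ^ 4 + 1 = aeval ρ (cyclotomic 8 ℤ) := by simp [cyclotomic_eight]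
    _ = 0 := by rw [AdjoinRoot.aeval_eq, AdjoinRoot.mk_self]

instance : IsDomain ZZeta8 :=
  AdjoinRoot.isDomain_of_prime (cyclotomic.irreducible (by norm_num)).prime

instance : CharZero ZZeta8 :=
  charZero_of_injective_algebraMap
    (AdjoinRoot.of.injective_of_degree_ne_zero (degree_cyclotomic_pos 8 ℤ (by norm_num)).ne')

lemma eq_zero_of_forall_five_pow_dvd {x : ZZeta8} (hx : ∀ n : ℕ, 5 ^ n ∣ x) : x = 0 := by
  let b := (AdjoinRoot.powerBasis' (cyclotomic.monic 8 ℤ)).basis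
  refine b.ext_elem fun i => ?_
  have hdvd : ∀ n : ℕ, (5 : ℤ) ^ n ∣ b.repr x i := fun n => by
    obtain ⟨y, rfl⟩ := hx n
    refine ⟨b.repr y i, ?_⟩
    rw [← Int.cast_ofNat, ← Int.cast_pow, ← zsmul_eq_mul, map_zsmul, Finsupp.smul_apply,
      smul_eq_mul]
  rw [map_zero, Finsupp.zero_apply]
  exact Int.eq_zero_of_dvd_of_natAbs_lt_natAbs (hdvd _)
    (by simpa [Int.natAbs_pow] using Nat.lt_pow_self (by norm_num : 1 < 5))

lemma not_isUnit_five : ¬IsUnit (5 : ZZeta8) := by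
  rintro ⟨u, hu⟩
  refine one_ne_zero (eq_zero_of_forall_five_pow_dvd fun n => ⟨(u⁻¹ : ZZeta8ˣ) ^ n, ?_⟩)
  rw [← mul_pow, ← hu]
  simp

noncomputable abbrev mod5 : ZZeta8 →+* ZZeta8 ⧸ Ideal.span {(5 : ZZeta8)} := Ideal.Quotient.mk _

instance : CharP (ZZeta8 ⧸ Ideal.span {(5 : ZZeta8)}) 5 :=
  haveI : Fact (Nat.Prime 5) := ⟨Nat.prime_five⟩
  by simpa using CharP.quotient ZZeta8 5 (by simpa using not_isUnit_five)

instance : ExpChar (ZZeta8 ⧸ Ideal.span {(5 : ZZeta8)}) 5 := .prime Nat.prime_five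

-- The square of Frobenius fixes `mod5 ρ`, since `ρ ^ 24 = 1`.
lemma pow_twentyfive_eq_self (x : ZZeta8 ⧸ Ideal.span {(5 : ZZeta8)}) : x ^ 25 = x := by
  suffices (iterateFrobenius _ 5 2).comp mod5 = mod5 by
    obtain ⟨y, rfl⟩ := Ideal.Quotient.mk_surjective x
    exact congr($this y)
  refine AdjoinRoot.ringHom_ext (RingHom.ext_int _ _) ?_
  rw [RingHom.comp_apply, iterateFrobenius_def, ← map_pow,
    show ρ ^ 5 ^ 2 = ρ * (ρ ^ 4) ^ 6 by ring, ρ_pow_four]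
  norm_num

lemma five_dvd_of_five_dvd_sq_sub_ρ_mul_sq {x y : ZZeta8} (h : 5 ∣ x ^ 2 - ρ * y ^ 2) :
    5 ∣ x ∧ 5 ∣ y := by
  simp only [← Ideal.mem_span_singleton, ← Ideal.Quotient.eq_zero_iff_mem] at h ⊢
  refine eq_zero_of_sq_eq_mul_sq (n := 12) (c := mod5 ρ) pow_twentyfive_eq_self ?_ ?_ ?_
  · exact IsUnit.of_mul_eq_one 3 (by linear_combination (CharP.cast_eq_zero _ 5 :
      ((5 : ℕ) : ZZeta8 ⧸ Ideal.span {(5 : ZZeta8)}) = 0))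
  · rw [← map_pow, show ρ ^ 12 = (ρ ^ 4) ^ 3 by ring, ρ_pow_four]
    norm_num
  · simpa [sub_eq_zero] using h

lemma exists_five_mul_of_sq_sub_five_mul_sq_eq {x y s t : ZZeta8}
    (h : x ^ 2 - 5 * y ^ 2 = ρ * (s ^ 2 - 5 * t ^ 2)) :
    ∃ x' y' s' t', x = 5 * x' ∧ y = 5 * y' ∧ s = 5 * s' ∧ t = 5 * t' ∧
      x' ^ 2 - 5 * y' ^ 2 = ρ * (s' ^ 2 - 5 * t' ^ 2) := by
  have h5 : (5 : ZZeta8) ≠ 0 := by norm_num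
  obtain ⟨⟨x', rfl⟩, ⟨s', rfl⟩⟩ := five_dvd_of_five_dvd_sq_sub_ρ_mul_sq (x := x) (y := s)
    ⟨y ^ 2 - ρ * t ^ 2, by linear_combination h⟩
  have h' : y ^ 2 - ρ * t ^ 2 = 5 * (x' ^ 2 - ρ * s' ^ 2) :=
    mul_left_cancel₀ h5 (by linear_combination -h)
  obtain ⟨⟨y', rfl⟩, ⟨t', rfl⟩⟩ := five_dvd_of_five_dvd_sq_sub_ρ_mul_sq ⟨_, h'⟩
  exact ⟨x', y', s', t', rfl, rfl, rfl, rfl, mul_left_cancel₀ h5 (by linear_combination -h')⟩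

lemma five_pow_dvd_of_sq_sub_five_mul_sq_eq (n : ℕ) {x y s t : ZZeta8}
    (h : x ^ 2 - 5 * y ^ 2 = ρ * (s ^ 2 - 5 * t ^ 2)) :
    5 ^ n ∣ x ∧ 5 ^ n ∣ y ∧ 5 ^ n ∣ s ∧ 5 ^ n ∣ t := by
  induction n generalizing x y s t with
  | zero => simp
  | succ n ih =>
    obtain ⟨x', y', s', t', rfl, rfl, rfl, rfl, h'⟩ := exists_five_mul_of_sq_sub_five_mul_sq_eq h
    obtain ⟨hx, hy, hs, ht⟩ := ih h'
    simp only [pow_succ']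
    exact ⟨mul_dvd_mul_left 5 hx, mul_dvd_mul_left 5 hy, mul_dvd_mul_left 5 hs,
      mul_dvd_mul_left 5 ht⟩

lemma eq_zero_of_sq_sub_five_mul_sq_eq {x y s t : ZZeta8}
    (h : x ^ 2 - 5 * y ^ 2 = ρ * (s ^ 2 - 5 * t ^ 2)) : x = 0 ∧ y = 0 ∧ s = 0 ∧ t = 0 := by
  have hdvd n := five_pow_dvd_of_sq_sub_five_mul_sq_eq n h
  exact ⟨eq_zero_of_forall_five_pow_dvd fun n => (hdvd n).1,
    eq_zero_of_forall_five_pow_dvd fun n => (hdvd n).2.1,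
    eq_zero_of_forall_five_pow_dvd fun n => (hdvd n).2.2.1,
    eq_zero_of_forall_five_pow_dvd fun n => (hdvd n).2.2.2⟩

theorem eq_zero_of_goldenNorm_eq {u v s t : ZZeta8} (h : goldenNorm u v = ρ * goldenNorm s t) :
    u = 0 ∧ v = 0 ∧ s = 0 ∧ t = 0 := by
  obtain ⟨hu, rfl, hs, rfl⟩ :=
    eq_zero_of_sq_sub_five_mul_sq_eq (x := 2 * u + v) (y := v) (s := 2 * s + t) (t := t)
      (by rw [goldenNorm, goldenNorm] at h; linear_combination 4 * h)
  simp_all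

noncomputable def toComplex {z : ℂ} (hz : z ^ 2 = I) : ZZeta8 →+* ℂ :=
  AdjoinRoot.lift (Int.castRingHom ℂ) z <| by
    rw [cyclotomic_eight]
    simp [show z ^ 4 = (z ^ 2) ^ 2 by ring, hz]

@[simp]
lemma toComplex_ρ {z : ℂ} (hz : z ^ 2 = I) : toComplex hz ρ = z := AdjoinRoot.lift_root _

lemma toComplex_injective {z : ℂ} (hz : z ^ 2 = I) : Function.Injective (toComplex hz) := by
  have hprim := isPrimitiveRoot_of_sq_eq_I hz
  refine (injective_iff_map_eq_zero _).2 fun x hx => ?_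
  obtain ⟨f, rfl⟩ := AdjoinRoot.mk_surjective x
  rw [AdjoinRoot.mk_eq_zero, cyclotomic_eq_minpoly hprim (by norm_num)]
  exact minpoly.isIntegrallyClosed_dvd (hprim.isIntegral (by norm_num)) hx

-- The lift `m + n ρ²` of `N • (p + q i)` works for every embedding `ρ ↦ z` with `z² = i` at once.
lemma exists_toComplex_eq_int_mul {ι : Type*} [Finite ι] {a : ι → ℂ} (ha : ∀ i, a i ∈ Qi) :
    ∃ N : ℤ, N ≠ 0 ∧ ∃ β : ι → ZZeta8,
      ∀ {z : ℂ} (hz : z ^ 2 = I) (i : ι), toComplex hz (β i) = N * a i := by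
  choose p q hpq using ha
  obtain ⟨⟨N, hN⟩, hint⟩ :=
    IsLocalization.exist_integer_multiples_of_finite (nonZeroDivisors ℤ) (Sum.elim p q)
  choose m hm using fun i => hint (Sum.inl i)
  choose n hn using fun i => hint (Sum.inr i)
  refine ⟨N, nonZeroDivisors.ne_zero hN, fun i => m i + n i * ρ ^ 2, fun hz i => ?_⟩
  have hm' : (m i : ℂ) = N * p i := by exact_mod_cast hm i
  have hn' : (n i : ℂ) = N * q i := by exact_mod_cast hn i
  simp only [map_add, map_mul, map_pow, map_intCast, toComplex_ρ, hz, hm', hn', hpq]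
  ring

end ZZeta8

lemma zeta8_sq : ζ₈ ^ 2 = I := by
  rw [ζ₈, ← Complex.exp_nat_mul,
    show ((2 : ℕ) : ℂ) * (Real.pi * I / 4) = Real.pi / 2 * I by push_cast; ring]
  simp

lemma neg_zeta8_sq : (-ζ₈) ^ 2 = I := by rw [neg_sq, zeta8_sq]

lemma θ_add_θbar : θ + θbar = 1 := by
  simp only [θ, θbar]; push_cast; ring

lemma θ_mul_θbar : θ * θbar = -1 := by
  rw [θ, θbar, ← ofReal_mul, show (1 + √5) / 2 * ((1 - √5) / 2) = (1 - √5 ^ 2) / 4 by ring,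
    Real.sq_sqrt (by norm_num)]
  norm_num

lemma θbar_eq : θbar = 1 - θ := by rw [← θ_add_θbar]; ring

lemma mul_θ_mul_θbar (x y : ℂ) : (x + y * θ) * (x + y * θbar) = goldenNorm x y := by
  rw [goldenNorm]
  linear_combination x * y * θ_add_θbar + y ^ 2 * θ_mul_θbar

def embWith (z w : ℂ) (a : Fin 4 → ℂ) : ℂ := a 0 + a 1 * z + a 2 * w + a 3 * z * w

lemma emb_eq (a : Fin 4 → ℂ) : emb a = embWith ζ₈ θ a := rfl

lemma embσ_eq (a : Fin 4 → ℂ) : embσ a = embWith ζ₈ θbar a := rfl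

lemma embτ_eq (a : Fin 4 → ℂ) : embτ a = embWith (-ζ₈) θ a := by rw [embτ, embWith]; ring

lemma embστ_eq (a : Fin 4 → ℂ) : embστ a = embWith (-ζ₈) θbar a := by rw [embστ, embWith]; ring

lemma int_mul_embWith {N : ℤ} {a : Fin 4 → ℂ} {β : Fin 4 → ZZeta8} {z : ℂ} (hz : z ^ 2 = I)
    (hβ : ∀ i, ZZeta8.toComplex hz (β i) = N * a i) (w : ℂ) :
    N * embWith z w a = ZZeta8.toComplex hz (β 0 + β 1 * ZZeta8.ρ) +
      ZZeta8.toComplex hz (β 2 + β 3 * ZZeta8.ρ) * w := by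
  simp only [map_add, map_mul, ZZeta8.toComplex_ρ, hβ, embWith]
  ring

noncomputable def goldenDet (z : ℂ) (a b : Fin 4 → ℂ) : ℂ :=
  embWith z θ a * embWith z θbar a - z * (embWith z θ b * embWith z θbar b)

theorem goldenDet_ne_zero {z : ℂ} (hz : z ^ 2 = I) {a b : Fin 4 → ℂ} (ha : ∀ i, a i ∈ Qi)
    (hb : ∀ i, b i ∈ Qi) (hab : ¬(emb a = 0 ∧ emb b = 0)) : goldenDet z a b ≠ 0 := by
  obtain ⟨N, hN, β, hβ⟩ := ZZeta8.exists_toComplex_eq_int_mul (a := Sum.elim a b) (by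
    rintro (i | i)
    exacts [ha i, hb i])
  intro hdet
  rw [goldenDet] at hdet
  set βa := β ∘ Sum.inl
  set βb := β ∘ Sum.inr
  have hβa {z' : ℂ} (hz' : z' ^ 2 = I) :=
    int_mul_embWith hz' (a := a) (β := βa) fun i => hβ hz' (.inl i)
  have hβb {z' : ℂ} (hz' : z' ^ 2 = I) :=
    int_mul_embWith hz' (a := b) (β := βb) fun i => hβ hz' (.inr i)
  have hnorm : goldenNorm (βa 0 + βa 1 * ZZeta8.ρ) (βa 2 + βa 3 * ZZeta8.ρ) =
      ZZeta8.ρ * goldenNorm (βb 0 + βb 1 * ZZeta8.ρ) (βb 2 + βb 3 * ZZeta8.ρ) := by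
    refine ZZeta8.toComplex_injective hz ?_
    rw [map_mul, map_goldenNorm, map_goldenNorm, ZZeta8.toComplex_ρ, ← mul_θ_mul_θbar,
      ← mul_θ_mul_θbar, ← hβa hz, ← hβa hz, ← hβb hz, ← hβb hz]
    linear_combination (N : ℂ) ^ 2 * hdet
  obtain ⟨hu, hv, hs, ht⟩ := ZZeta8.eq_zero_of_goldenNorm_eq hnorm
  -- The vanishing happens in `ℤ[ζ₈]`, so it transfers from `z` to the embedding at `ζ₈`.
  refine hab ⟨?_, ?_⟩ <;> refine (mul_eq_zero.1 ?_).resolve_left (Int.cast_ne_zero.2 hN)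
  · rw [emb_eq, hβa zeta8_sq, hu, hv]
    simp
  · rw [emb_eq, hβb zeta8_sq, hs, ht]
    simp

lemma det_Xi (a b : Fin 4 → ℂ) : (Xi a b).det = goldenDet ζ₈ a b := by
  rw [Xi, det_fin_two_of, goldenDet, emb_eq, emb_eq, embσ_eq, embσ_eq]
  ring

lemma det_tauXi (a b : Fin 4 → ℂ) : (tauXi a b).det = goldenDet (-ζ₈) a b := by
  rw [tauXi, det_fin_two_of, goldenDet, embτ_eq, embτ_eq, embστ_eq, embστ_eq]
  ring

lemma isIntegral_zeta8 : IsIntegral ℚ ζ₈ :=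
  ((isPrimitiveRoot_of_sq_eq_I zeta8_sq).isIntegral (by norm_num)).tower_top

lemma isIntegral_θ : IsIntegral ℚ θ := by
  refine ⟨X ^ 2 - X - 1, by monicity!, ?_⟩
  simp only [eval₂_sub, eval₂_X_pow, eval₂_X, eval₂_one]
  linear_combination θ * θ_add_θbar - θ_mul_θbar

section Membership

variable {S : Subalgebra ℚ ℂ}

lemma Qi_subset (hI : I ∈ S) : Qi ⊆ S := by
  rintro _ ⟨p, q, rfl⟩
  exact add_mem (S.algebraMap_mem p) (mul_mem (S.algebraMap_mem q) hI)

lemma embWith_mem {z w : ℂ} {a : Fin 4 → ℂ} (hz : z ∈ S) (hw : w ∈ S) (ha : ∀ i, a i ∈ S) :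
    embWith z w a ∈ S :=
  add_mem (add_mem (add_mem (ha 0) (mul_mem (ha 1) hz)) (mul_mem (ha 2) hw))
    (mul_mem (mul_mem (ha 3) hz) hw)

variable (hζ : ζ₈ ∈ S) (hθ : θ ∈ S) (hθbar : θbar ∈ S) {a b : Fin 4 → ℂ}
  (ha : ∀ i, a i ∈ S) (hb : ∀ i, b i ∈ S)
include hζ hθ hθbar ha hb

lemma Xi_mem (i j : Fin 2) : Xi a b i j ∈ S := by
  fin_cases i <;> fin_cases j
  · exact embWith_mem hζ hθ ha
  · exact embWith_mem hζ hθ hb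
  · exact mul_mem hζ (embWith_mem hζ hθbar hb)
  · exact embWith_mem hζ hθbar ha

lemma tauXi_mem (i j : Fin 2) : tauXi a b i j ∈ S := by
  rw [tauXi, embτ_eq, embτ_eq, embστ_eq, embστ_eq]
  fin_cases i <;> fin_cases j
  · exact embWith_mem (neg_mem hζ) hθ ha
  · exact embWith_mem (neg_mem hζ) hθ hb
  · exact mul_mem (neg_mem hζ) (embWith_mem (neg_mem hζ) hθbar hb)
  · exact embWith_mem (neg_mem hζ) hθbar ha

end Membership

/-- Let `γ ∈ ℂ` be transcendental over `ℚ`. For all `x₁, y₁, x₂, y₂ ∈ K = ℚ(ζ₈, √5)` with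
`(x₁, y₁) ≠ (0, 0)` and `(x₂, y₂) ≠ (0, 0)`, the joint codeword matrix
`X = [[Ξ(x₁, y₁), τ(Ξ(x₁, y₁))], [γ·Ξ(x₂, y₂), τ(Ξ(x₂, y₂))]]` has nonzero determinant. -/
theorem joint_codeword_full_rank_transcendental (γ : ℂ) (hγ : Transcendental ℚ γ) :
    ∀ a₁ b₁ a₂ b₂ : Fin 4 → ℂ,
      (∀ i, a₁ i ∈ Qi) → (∀ i, b₁ i ∈ Qi) → (∀ i, a₂ i ∈ Qi) → (∀ i, b₂ i ∈ Qi) →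
      ¬(emb a₁ = 0 ∧ emb b₁ = 0) → ¬(emb a₂ = 0 ∧ emb b₂ = 0) →
      (Matrix.fromBlocks (Xi a₁ b₁) (tauXi a₁ b₁) (γ • Xi a₂ b₂) (tauXi a₂ b₂)).det ≠ 0 := by
  intro a₁ b₁ a₂ b₂ ha₁ hb₁ ha₂ hb₂ hne₁ hne₂
  set 𝔸 := integralClosure ℚ ℂ
  have hζ : ζ₈ ∈ 𝔸 := isIntegral_zeta8
  have hθ : θ ∈ 𝔸 := isIntegral_θ
  have hθbar : θbar ∈ 𝔸 := θbar_eq ▸ sub_mem (one_mem _) hθ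
  have hQi : Qi ⊆ 𝔸 := Qi_subset (zeta8_sq ▸ pow_mem hζ 2)
  obtain ⟨A, hA⟩ := Matrix.exists_map_algebraMap_eq
    (Xi_mem hζ hθ hθbar (hQi <| ha₁ ·) (hQi <| hb₁ ·))
  obtain ⟨B, hB⟩ := Matrix.exists_map_algebraMap_eq
    (tauXi_mem hζ hθ hθbar (hQi <| ha₁ ·) (hQi <| hb₁ ·))
  obtain ⟨C, hC⟩ := Matrix.exists_map_algebraMap_eq
    (Xi_mem hζ hθ hθbar (hQi <| ha₂ ·) (hQi <| hb₂ ·))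
  obtain ⟨D, hD⟩ := Matrix.exists_map_algebraMap_eq
    (tauXi_mem hζ hθ hθbar (hQi <| ha₂ ·) (hQi <| hb₂ ·))
  rw [← hA, ← hB, ← hC, ← hD]
  refine det_fromBlocks_smul_ne_zero_of_transcendental A B C D
    (hγ.extendScalars_of_isIntegral 𝔸) ?_
  rw [hA, hD, det_Xi, det_tauXi]
  exact mul_ne_zero (goldenDet_ne_zero zeta8_sq ha₁ hb₁ hne₁)
    (goldenDet_ne_zero neg_zeta8_sq ha₂ hb₂ hne₂)
end
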